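/- Let A be an associative unital ring and let x, θ, ∂_x, ∂_θ, h ∈ A satisfy: h² = 0; h commutes with x and ∂_x; h anticommutes with θ and ∂_θ; the h-superplane relations xθ = θx + hx² and θ² = −hθx; and the derivative relations ∂_x∂_θ = ∂_θ∂_x and ∂_θ² = 0. Write X⁰ := x, X¹ := θ, ∂₀ := ∂_x, ∂₁ := ∂_θ, and let K̂ be the 4×4 array over A indexed by pairs (i,j) ∈ {0,1}×{0,1} (ordered (0,0),(0,1),(1,0),(1,1)) with rows [1,0,0,0], [h,0,1,0], [−h,1,0,0], [0,−h,−h,−1]. Then for all i,j ∈ {0,1}: Xⁱ·Xʲ = Σ_{k,l} K̂[(i,j),(k,l)]·Xᵏ·Xˡ, and ∂ᵢ·∂ⱼ = Σ_{k,l} K̂[(k,l),(j,i)]·∂ₗ·∂ₖ. -/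
import Mathlib


open Matrix

/-- Encoding of pairs in `{0,1} × {0,1}` in the order `(0,0),(0,1),(1,0),(1,1)`. -/
def enc (p : Fin 2 × Fin 2) : Fin 4 := ⟨2 * p.1.val + p.2.val, by omega⟩

/-- The matrix `K̂_h` with rows `[1,0,0,0], [h,0,1,0], [−h,1,0,0], [0,−h,−h,−1]`,
over a possibly noncommutative ring. -/
def Khat {A : Type*} [Ring A] (h : A) :
    Matrix (Fin 2 × Fin 2) (Fin 2 × Fin 2) A :=
  Matrix.of fun p q =>
    (!![(1 : A), 0, 0, 0;
        h, 0, 1, 0;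
        -h, 1, 0, 0;
        0, -h, -h, -1]) (enc p) (enc q)

/-- The `h`-superplane relations among the coordinates `X⁰ = x, X¹ = θ` and
those among the derivatives `∂₀ = ∂_x, ∂₁ = ∂_θ` are expressed by the matrix
`K̂_h`: `Xⁱ Xʲ = K̂^{ij}_{kl} Xᵏ Xˡ` and `∂ᵢ ∂ⱼ = K̂^{kl}_{ji} ∂ₗ ∂ₖ`. -/
theorem coordinates_and_derivatives_via_Khat {A : Type*} [Ring A]
    (x θ px pθ h : A)
    (hh : h ^ 2 = 0)
    (hhx : h * x = x * h) (hhpx : h * px = px * h)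
    (hhθ : h * θ = -(θ * h)) (hhpθ : h * pθ = -(pθ * h))
    (hxθ : x * θ = θ * x + h * x ^ 2) (hθθ : θ ^ 2 = -(h * (θ * x)))
    (hpxpθ : px * pθ = pθ * px) (hpθ2 : pθ ^ 2 = 0) :
    (∀ i j : Fin 2,
      ![x, θ] i * ![x, θ] j =
        ∑ k : Fin 2, ∑ l : Fin 2,
          Khat h (i, j) (k, l) * (![x, θ] k * ![x, θ] l)) ∧
    (∀ i j : Fin 2,
      ![px, pθ] i * ![px, pθ] j =
        ∑ k : Fin 2, ∑ l : Fin 2,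
          Khat h (k, l) (j, i) * (![px, pθ] l * ![px, pθ] k)) := by
  have hh' : h * h = 0 := by rw [← pow_two]; exact hh
  have hθθ' : θ * θ = -(h * (θ * x)) := by rw [← pow_two]; exact hθθ
  have hpθ2' : pθ * pθ = 0 := by rw [← pow_two]; exact hpθ2
  constructor <;> intro i j <;> fin_cases i <;> fin_cases j <;>
    simp [Khat, enc, Fin.sum_univ_two] <;>
    simp only [pow_two, hxθ, hθθ', hpθ2', hpxpθ, mul_add, ← mul_assoc, hh', zero_mul, mul_zero,
      add_zero, neg_add_rev, neg_neg, neg_zero, zero_add] <;>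
    abel
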